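/- arXiv:2303.04122 — 2 statements merged into one kernel-verified Lean document; each statement's English description precedes it below -/
import Mathlib

section
/- For every integer n ≥ 1, 9·S_2 + 126·S_4 + 336·S_6 + 144·S_8 = (2n+1)·(S_1 + 28·S_3 + 112·S_5 + 64·S_7), where S_m = Σ_{r=1}^{n} r^m. -/
/-!
With `x = 2r`, the odd combination is `r + 28r³ + 112r⁵ + 64r⁷ = ((x+1)⁸ - (x-1)⁸)/32` and the even one
is `9r² + 126r⁴ + 336r⁶ + 144r⁸ = ((x+1)⁹ - (x-1)⁹ - 2)/32`. Both sums telescope, to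
`((2n+1)⁸ - 1)/32` and `((2n+1)⁹ - (2n+1))/32` respectively, and the second is `2n+1` times the first.
-/

open Finset

lemma Finset.sum_Icc_one_sub {M : Type*} [AddCommGroup M] (f : ℕ → M) (n : ℕ) :
    ∑ i ∈ Icc 1 n, (f (i + 1) - f i) = f (n + 1) - f 1 := by
  rw [← Finset.Ico_add_one_right_eq_Icc, sum_Ico_sub f (by omega)]

lemma sum_Icc_two_mul_add_one_pow_sub (k n : ℕ) :
    ∑ r ∈ Icc 1 n, ((2 * (r : ℚ) + 1) ^ k - (2 * r - 1) ^ k) = (2 * n + 1) ^ k - 1 := by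
  have h := sum_Icc_one_sub (fun r : ℕ => (2 * (r : ℚ) - 1) ^ k) n
  push_cast at h
  convert h using 2 <;> ring

lemma sum_Icc_odd_pow_combination (n : ℕ) :
    ∑ r ∈ Icc 1 n, ((r : ℚ) ^ 1 + 28 * r ^ 3 + 112 * r ^ 5 + 64 * r ^ 7) =
      ((2 * (n : ℚ) + 1) ^ 8 - 1) / 32 := by
  rw [eq_div_iff (by norm_num), ← sum_Icc_two_mul_add_one_pow_sub, sum_mul]
  exact sum_congr rfl fun r _ => by ring

lemma sum_Icc_even_pow_combination (n : ℕ) :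
    ∑ r ∈ Icc 1 n, (9 * (r : ℚ) ^ 2 + 126 * r ^ 4 + 336 * r ^ 6 + 144 * r ^ 8) =
      ((2 * (n : ℚ) + 1) ^ 9 - (2 * n + 1)) / 32 := by
  rw [eq_div_iff (by norm_num), sum_mul]
  calc ∑ r ∈ Icc 1 n, (9 * (r : ℚ) ^ 2 + 126 * r ^ 4 + 336 * r ^ 6 + 144 * r ^ 8) * (32 : ℚ)
      = ∑ r ∈ Icc 1 n, (((2 * (r : ℚ) + 1) ^ 9 - (2 * r - 1) ^ 9) - 2) :=
        sum_congr rfl fun r _ => by ring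
    _ = (2 * (n : ℚ) + 1) ^ 9 - (2 * n + 1) := by
        rw [sum_sub_distrib, sum_Icc_two_mul_add_one_pow_sub]
        simp only [sum_const, Nat.card_Icc, add_tsub_cancel_right, nsmul_eq_mul]
        ring

theorem stmt_3_general (n : ℕ) :
    9 * (∑ r ∈ Finset.Icc 1 n, (r : ℚ) ^ 2) + 126 * (∑ r ∈ Finset.Icc 1 n, (r : ℚ) ^ 4) +
      336 * (∑ r ∈ Finset.Icc 1 n, (r : ℚ) ^ 6) + 144 * (∑ r ∈ Finset.Icc 1 n, (r : ℚ) ^ 8) =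
    (2 * (n : ℚ) + 1) * ((∑ r ∈ Finset.Icc 1 n, (r : ℚ) ^ 1) +
      28 * (∑ r ∈ Finset.Icc 1 n, (r : ℚ) ^ 3) + 112 * (∑ r ∈ Finset.Icc 1 n, (r : ℚ) ^ 5) +
      64 * (∑ r ∈ Finset.Icc 1 n, (r : ℚ) ^ 7)) := by
  simp only [mul_sum, ← sum_add_distrib]
  rw [← mul_sum, sum_Icc_even_pow_combination, sum_Icc_odd_pow_combination]
  ring

theorem stmt_3 (n : ℕ) (hn : 1 ≤ n) :
    9 * (∑ r ∈ Finset.Icc 1 n, (r : ℚ) ^ 2) + 126 * (∑ r ∈ Finset.Icc 1 n, (r : ℚ) ^ 4) +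
      336 * (∑ r ∈ Finset.Icc 1 n, (r : ℚ) ^ 6) + 144 * (∑ r ∈ Finset.Icc 1 n, (r : ℚ) ^ 8) =
    (2 * (n : ℚ) + 1) * ((∑ r ∈ Finset.Icc 1 n, (r : ℚ) ^ 1) +
      28 * (∑ r ∈ Finset.Icc 1 n, (r : ℚ) ^ 3) + 112 * (∑ r ∈ Finset.Icc 1 n, (r : ℚ) ^ 5) +
      64 * (∑ r ∈ Finset.Icc 1 n, (r : ℚ) ^ 7)) :=
  stmt_3_general n
end

section
/- For every integer n ≥ 1 and k ≥ 1, the sum of the (2k−1)-th powers of the first 2n positive integers satisfies S_{2k−1}(2n) = (2n+1)·n^{2k−1} + 2·Σ_{j=1}^{k−1} C(2k−1, 2j) · S_{2j} · n^{2k−2j−1}, where S_{2j} = Σ_{r=1}^{n} r^{2j} and S_{2k−1}(2n) = Σ_{r=1}^{2n} r^{2k−1}. -/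
/-!
Group the terms of `∑_{r=0}^{2n} r^m` (with `m = 2k - 1` odd) symmetrically about the centre:
`n^m + ∑_{i=1}^{n} ((n + i)^m + (n - i)^m)`. By the binomial theorem the odd powers of `i`
cancel in `(n + i)^m + (n - i)^m`, leaving `2 ∑_j C(m, 2j) i^{2j} n^{m-2j}`; summing over `i`
turns `i^{2j}` into `S_{2j}`, and the `j = 0` term contributes `2n · n^m`.
-/

open Finset

theorem Finset.sum_Icc_one_eq_sum_range {M : Type*} [AddCommMonoid M] (f : ℕ → M) (n : ℕ) :
    ∑ i ∈ Icc 1 n, f i = ∑ i ∈ range n, f (i + 1) := by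
  rw [← Ico_add_one_right_eq_Icc, sum_Ico_eq_sum_range, Nat.add_sub_cancel]
  simp only [add_comm 1]

theorem Finset.sum_range_two_mul {M : Type*} [AddCommMonoid M] (f : ℕ → M) (n : ℕ) :
    ∑ i ∈ range (2 * n), f i = ∑ j ∈ range n, (f (2 * j) + f (2 * j + 1)) := by
  induction n with
  | zero => simp
  | succ n ih => rw [mul_add_one, sum_range_succ, sum_range_succ, sum_range_succ, ih, add_assoc]

theorem Finset.sum_range_two_mul_add_one {M : Type*} [AddCommMonoid M] (f : ℕ → M) (n : ℕ) :
    ∑ r ∈ range (2 * n + 1), f r = f n + ∑ i ∈ Icc 1 n, (f (n + i) + f (n - i)) := by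
  rw [two_mul, add_assoc, sum_range_add, sum_range_succ', ← sum_range_reflect,
    sum_Icc_one_eq_sum_range, sum_add_distrib]
  simp only [add_zero, Nat.sub_sub, add_comm 1]
  abel

theorem add_pow_add_sub_pow_odd {R : Type*} [CommRing R] (x y : R) (k : ℕ) :
    (x + y) ^ (2 * k + 1) + (x - y) ^ (2 * k + 1) =
      2 * ∑ j ∈ range (k + 1),
        ((2 * k + 1).choose (2 * j) : R) * y ^ (2 * j) * x ^ (2 * k + 1 - 2 * j) := by
  rw [add_comm x, sub_eq_neg_add, add_pow, add_pow, ← sum_add_distrib,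
    show 2 * k + 1 + 1 = 2 * (k + 1) by ring, sum_range_two_mul, mul_sum]
  refine sum_congr rfl fun j _ => ?_
  rw [(even_two_mul j).neg_pow, (odd_two_mul_add_one j).neg_pow]
  ring

theorem stmt_16_general (n k : ℕ) (hk : 1 ≤ k) :
    (∑ r ∈ Finset.Icc 1 (2 * n), (r : ℚ) ^ (2 * k - 1)) =
    (2 * (n : ℚ) + 1) * (n : ℚ) ^ (2 * k - 1) +
      2 * ∑ j ∈ Finset.Icc 1 (k - 1), (Nat.choose (2 * k - 1) (2 * j) : ℚ) *
        (∑ r ∈ Finset.Icc 1 n, (r : ℚ) ^ (2 * j)) * (n : ℚ) ^ (2 * k - 2 * j - 1) := by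
  obtain ⟨k, rfl⟩ : ∃ k', k = k' + 1 := ⟨k - 1, by omega⟩
  rw [show 2 * (k + 1) - 1 = 2 * k + 1 by omega, Nat.add_sub_cancel]
  calc ∑ r ∈ Icc 1 (2 * n), (r : ℚ) ^ (2 * k + 1)
      = ∑ r ∈ range (2 * n + 1), (r : ℚ) ^ (2 * k + 1) := by
        rw [sum_Icc_one_eq_sum_range, sum_range_succ']
        simp
    _ = n ^ (2 * k + 1) +
          ∑ i ∈ Icc 1 n, (((n : ℚ) + i) ^ (2 * k + 1) + ((n : ℚ) - i) ^ (2 * k + 1)) := by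
        rw [sum_range_two_mul_add_one]
        refine congrArg _ (sum_congr rfl fun i hi => ?_)
        rw [Nat.cast_sub (mem_Icc.mp hi).2]
        push_cast
        rfl
    _ = n ^ (2 * k + 1) + 2 * ∑ j ∈ range (k + 1), ((2 * k + 1).choose (2 * j) : ℚ) *
          (∑ r ∈ Icc 1 n, (r : ℚ) ^ (2 * j)) * (n : ℚ) ^ (2 * k + 1 - 2 * j) := by
        simp only [add_pow_add_sub_pow_odd, mul_sum, sum_mul]
        rw [sum_comm]
    _ = _ := by
        rw [sum_range_succ', sum_Icc_one_eq_sum_range _ k]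
        have hexp (j : ℕ) : 2 * (k + 1) - 2 * (j + 1) - 1 = 2 * k + 1 - 2 * (j + 1) := by omega
        simp only [hexp, mul_zero, Nat.choose_zero_right, pow_zero, sum_const, Nat.card_Icc,
          Nat.add_sub_cancel, nsmul_eq_mul, Nat.cast_one, mul_one, one_mul, Nat.sub_zero]
        ring

theorem stmt_16 (n k : ℕ) (hn : 1 ≤ n) (hk : 1 ≤ k) :
    (∑ r ∈ Finset.Icc 1 (2 * n), (r : ℚ) ^ (2 * k - 1)) =
    (2 * (n : ℚ) + 1) * (n : ℚ) ^ (2 * k - 1) +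
      2 * ∑ j ∈ Finset.Icc 1 (k - 1), (Nat.choose (2 * k - 1) (2 * j) : ℚ) *
        (∑ r ∈ Finset.Icc 1 n, (r : ℚ) ^ (2 * j)) * (n : ℚ) ^ (2 * k - 2 * j - 1) :=
  stmt_16_general n k hk
end
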